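/- Let a ≥ 0, b > 0, σ > 0, and let ν be a measure on (0,∞) with ∫_0^∞ (z∧1) ν(dz) < ∞ and ∫_{(1,∞)} log z ν(dz) < ∞. Define, for x ≥ 0, (AV)(x) := (a − bx)/(1+x) − σ²x/(2(1+x)²) + ∫_0^∞ log(1 + z/(1+x)) ν(dz). Then there exist positive constants c and M and a compact set K ⊂ [0,∞) such that (AV)(x) ≤ −c + M·1_K(x) for all x ≥ 0. -/

import Mathlib

open MeasureTheory Filter Set
open scoped ENNReal

/-- The generator of the jump-diffusion CIR process applied to the Foster-Lyapunov
function `V(x) = log(1+x)`. -/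
noncomputable def AV (a b σ : ℝ) (ν : Measure ℝ) (x : ℝ) : ℝ :=
  (a - b * x) / (1 + x) - σ ^ 2 * x / (2 * (1 + x) ^ 2) +
    ∫ z in Set.Ioi (0 : ℝ), Real.log (1 + z / (1 + x)) ∂ν

open scoped Topology

/-!
Let `J x = ∫ log (1 + z / (1 + x)) ν(dz)` be the jump part. For `x ≥ 0` the drift and
diffusion parts give `AV x ≤ (a + b) / (1 + x) - b + J x`. The moment conditions on `ν` make
`log (1 + z)` integrable, and it dominates the integrand of `J x`; so `J` is bounded on `[0, ∞)`
and tends to `0` at infinity by dominated convergence. Hence `AV x` is bounded on `[0, ∞)` and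
eventually below `-b / 2`, and `K = [0, R]` for `R` large does the job.
-/

namespace Real

theorem log_one_add_le_self {z : ℝ} (hz : 0 ≤ z) : log (1 + z) ≤ z := by
  linarith [log_le_sub_one_of_pos (by linarith : 0 < 1 + z)]

theorem log_one_add_le_one_add_log {z : ℝ} (hz : 1 ≤ z) : log (1 + z) ≤ 1 + log z := by
  have hz0 : 0 < z := by linarith
  calc log (1 + z) ≤ log (2 * z) := log_le_log (by linarith) (by linarith)
    _ = log 2 + log z := log_mul two_ne_zero hz0.ne'
    _ ≤ 1 + log z := by linarith [log_two_lt_d9]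

end Real

open Real

theorem integrableOn_log_one_add_Ioi {ν : Measure ℝ}
    (hν : ∫⁻ z in Ioi (0 : ℝ), ENNReal.ofReal (min z 1) ∂ν < ⊤)
    (hνlog : ∫⁻ z in Ioi (1 : ℝ), ENNReal.ofReal (log z) ∂ν < ⊤) :
    IntegrableOn (fun z => log (1 + z)) (Ioi 0) ν := by
  have hmin : IntegrableOn (fun z : ℝ => min z 1) (Ioi 0) ν :=
    (lintegral_ofReal_ne_top_iff_integrable (by fun_prop) (ae_restrict_of_forall_mem
      measurableSet_Ioi fun z (hz : 0 < z) => le_min hz.le zero_le_one)).1 hν.ne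
  have hlog : IntegrableOn log (Ioi 1) ν :=
    (lintegral_ofReal_ne_top_iff_integrable measurable_log.aestronglyMeasurable
      (ae_restrict_of_forall_mem measurableSet_Ioi fun z (hz : 1 < z) => log_nonneg hz.le)).1
      hνlog.ne
  have hmeas : Measurable fun z : ℝ => log (1 + z) := by fun_prop
  rw [← Ioc_union_Ioi_eq_Ioi zero_le_one]
  refine IntegrableOn.union ?_ ?_
  · refine Integrable.mono' (hmin.mono_set Ioc_subset_Ioi_self) hmeas.aestronglyMeasurable
      (ae_restrict_of_forall_mem measurableSet_Ioc fun z hz => ?_)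
    rw [norm_of_nonneg (log_nonneg (by linarith [hz.1])), min_eq_left hz.2]
    exact log_one_add_le_self hz.1.le
  · refine Integrable.mono' ((hmin.mono_set (Ioi_subset_Ioi zero_le_one)).add hlog)
      hmeas.aestronglyMeasurable
      (ae_restrict_of_forall_mem measurableSet_Ioi fun z (hz : 1 < z) => ?_)
    rw [norm_of_nonneg (log_nonneg (by linarith)), Pi.add_apply, min_eq_right hz.le]
    exact log_one_add_le_one_add_log hz.le

/-- The jump part `∫ (V (x + z) - V x) ν(dz)` of the generator applied to `V x = log (1 + x)`. -/
noncomputable def jumpTerm (ν : Measure ℝ) (x : ℝ) : ℝ :=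
  ∫ z in Ioi (0 : ℝ), log (1 + z / (1 + x)) ∂ν

theorem tendsto_div_one_add_atTop (z : ℝ) : Tendsto (fun x : ℝ => z / (1 + x)) atTop (𝓝 0) :=
  tendsto_const_nhds.div_atTop (tendsto_atTop_add_const_left _ 1 tendsto_id)

section jumpTerm

variable {ν : Measure ℝ} {x : ℝ}

theorem log_one_add_div_nonneg (hx : 0 ≤ x) {z : ℝ} (hz : 0 < z) :
    0 ≤ log (1 + z / (1 + x)) := by
  have : 0 ≤ z / (1 + x) := by positivity
  exact log_nonneg (by linarith)

theorem log_one_add_div_le (hx : 0 ≤ x) {z : ℝ} (hz : 0 < z) :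
    log (1 + z / (1 + x)) ≤ log (1 + z) := by
  have : 0 ≤ z / (1 + x) := by positivity
  exact log_le_log (by linarith) (by linarith [div_le_self hz.le (by linarith : 1 ≤ 1 + x)])

theorem jumpTerm_le (hint : IntegrableOn (fun z => log (1 + z)) (Ioi 0) ν) (hx : 0 ≤ x) :
    jumpTerm ν x ≤ ∫ z in Ioi (0 : ℝ), log (1 + z) ∂ν :=
  integral_mono_of_nonneg (ae_restrict_of_forall_mem measurableSet_Ioi
      fun _ hz => log_one_add_div_nonneg hx hz) hint
    (ae_restrict_of_forall_mem measurableSet_Ioi fun _ hz => log_one_add_div_le hx hz)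

theorem tendsto_jumpTerm_atTop (hint : IntegrableOn (fun z => log (1 + z)) (Ioi 0) ν) :
    Tendsto (jumpTerm ν) atTop (𝓝 0) := by
  have hlim : ∀ z : ℝ, Tendsto (fun x : ℝ => log (1 + z / (1 + x))) atTop (𝓝 0) := by
    intro z
    simpa using ((tendsto_div_one_add_atTop z).const_add 1).log (by norm_num)
  unfold jumpTerm
  simpa using tendsto_integral_filter_of_dominated_convergence (fun z => log (1 + z))
    (Eventually.of_forall fun x => (by fun_prop : Measurable _).aestronglyMeasurable)
    ((eventually_ge_atTop 0).mono fun x hx => ae_restrict_of_forall_mem measurableSet_Ioi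
      fun z hz => by
        rw [norm_of_nonneg (log_one_add_div_nonneg hx hz)]
        exact log_one_add_div_le hx hz)
    hint (ae_of_all _ hlim)

end jumpTerm

theorem AV_le (a b σ : ℝ) (ν : Measure ℝ) {x : ℝ} (hx : 0 ≤ x) :
    AV a b σ ν x ≤ (a + b) / (1 + x) - b + jumpTerm ν x := by
  have hdrift : (a - b * x) / (1 + x) = (a + b) / (1 + x) - b := by
    field_simp
    ring
  have hdiffusion : 0 ≤ σ ^ 2 * x / (2 * (1 + x) ^ 2) := by positivity
  rw [AV, hdrift, jumpTerm]
  linarith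

theorem exists_drift_indicator_of_eventually_le {f : ℝ → ℝ} {B c : ℝ}
    (hB : ∀ x, 0 ≤ x → f x ≤ B) (hc : ∀ᶠ x in atTop, f x ≤ -c) :
    ∃ M : ℝ, 0 < M ∧ ∃ K : Set ℝ, IsCompact K ∧ K ⊆ Ici 0 ∧
      ∀ x : ℝ, 0 ≤ x → f x ≤ -c + K.indicator (fun _ => M) x := by
  obtain ⟨R, hR⟩ := eventually_atTop.1 hc
  refine ⟨max (B + c) 1, by positivity, Icc 0 R, isCompact_Icc, fun y hy => hy.1,
    fun x hx => ?_⟩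
  by_cases hxR : x ≤ R
  · rw [indicator_of_mem (mem_Icc.2 ⟨hx, hxR⟩)]
    linarith [hB x hx, le_max_left (B + c) 1]
  · rw [indicator_of_notMem fun h => hxR (mem_Icc.1 h).2]
    linarith [hR x (le_of_not_ge hxR)]

theorem AV_foster_lyapunov_drift_general (a b σ : ℝ) (hb : 0 < b)
    (ν : Measure ℝ)
    (hν : ∫⁻ z in Set.Ioi (0 : ℝ), ENNReal.ofReal (min z 1) ∂ν < ⊤)
    (hνlog : ∫⁻ z in Set.Ioi (1 : ℝ), ENNReal.ofReal (Real.log z) ∂ν < ⊤) :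
    ∃ c : ℝ, 0 < c ∧ ∃ M : ℝ, 0 < M ∧ ∃ K : Set ℝ, IsCompact K ∧ K ⊆ Set.Ici 0 ∧
      ∀ x : ℝ, 0 ≤ x → AV a b σ ν x ≤ -c + Set.indicator K (fun _ => M) x := by
  have hint := integrableOn_log_one_add_Ioi hν hνlog
  have hlim : Tendsto (fun x => (a + b) / (1 + x) - b + jumpTerm ν x) atTop (𝓝 (-b)) := by
    simpa using
      ((tendsto_div_one_add_atTop (a + b)).sub_const b).add (tendsto_jumpTerm_atTop hint)
  refine ⟨b / 2, half_pos hb, exists_drift_indicator_of_eventually_le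
    (B := |a + b| - b + ∫ z in Ioi (0 : ℝ), log (1 + z) ∂ν) (fun x hx => ?_) ?_⟩
  · have hdiv : (a + b) / (1 + x) ≤ |a + b| :=
      (div_le_div_of_nonneg_right (le_abs_self _) (by linarith)).trans
        (div_le_self (abs_nonneg _) (by linarith))
    linarith [AV_le a b σ ν hx, jumpTerm_le hint hx]
  · filter_upwards [eventually_ge_atTop 0,
      hlim.eventually (gt_mem_nhds (by linarith : -b < -(b / 2)))] with x hx hlt
    exact (AV_le a b σ ν hx).trans hlt.le

theorem AV_foster_lyapunov_drift (a b σ : ℝ) (ha : 0 ≤ a) (hb : 0 < b) (hσ : 0 < σ)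
    (ν : Measure ℝ) (hνsupp : ν (Set.Iic 0) = 0)
    (hν : ∫⁻ z in Set.Ioi (0 : ℝ), ENNReal.ofReal (min z 1) ∂ν < ⊤)
    (hνlog : ∫⁻ z in Set.Ioi (1 : ℝ), ENNReal.ofReal (Real.log z) ∂ν < ⊤) :
    ∃ c : ℝ, 0 < c ∧ ∃ M : ℝ, 0 < M ∧ ∃ K : Set ℝ, IsCompact K ∧ K ⊆ Set.Ici 0 ∧
      ∀ x : ℝ, 0 ≤ x → AV a b σ ν x ≤ -c + Set.indicator K (fun _ => M) x :=
  AV_foster_lyapunov_drift_general a b σ hb ν hν hνlog
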